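/- arXiv:2502.04939 — 2 statements merged into one kernel-verified Lean document; each statement's English description precedes it below -/
import Mathlib

section
/- Fix n ≥ 3, m ≥ 1, k ∈ {1,...,n-1}, and set λ = -4^m sin^{2m}(πk/n) and γ = √(-λ). Then for any constants c₁, c₂ ∈ ℂ, the function X(t) = (c₁ cos(γt) + c₂ sin(γt))·P_k, where P_k = (1, ω^k, ..., ω^{(n-1)k})^T, solves X'' = (-1)^{m+1}M^m X for all t ∈ ℝ. -/
/-- The discrete Laplacian circulant matrix `circ(-2,1,0,…,0,1)` over `ℂ`. -/
noncomputable def lapM (n : ℕ) [NeZero n] : Matrix (Fin n) (Fin n) ℂ :=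
  Matrix.of fun i j =>
    (if j = i + 1 then 1 else 0) + (if j = i - 1 then 1 else 0) + (if j = i then -2 else 0)

/-- The basis polygon `P_k = (1, ω^k, …, ω^{(n-1)k})` with `ω = e^{2πi/n}`. -/
noncomputable def Pvec (n k : ℕ) : Fin n → ℂ :=
  fun j => Complex.exp (2 * (Real.pi : ℂ) * Complex.I * (k : ℂ) * ((j : ℕ) : ℂ) / (n : ℂ))

/-! The vector `P_k = (ω^{kj})_j` is geometric with ratio `ω^k`, an `n`-th root of unity, so
shifting it by `±1` multiplies it by `ω^{±k}` and `M P_k = (ω^k + ω^{-k} - 2) P_k = -4 sin²(πk/n) P_k`.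
Hence `(-1)^{m+1} M^m` acts on the line through `P_k` as the scalar `-4^m sin^{2m}(πk/n) = -γ²`,
and `c₁ cos(γt) + c₂ sin(γt)` is exactly a solution of `f'' = -γ² f`. -/

open Complex Matrix
open scoped Real

lemma lapM_mulVec_apply (n : ℕ) [NeZero n] (v : Fin n → ℂ) (i : Fin n) :
    (lapM n *ᵥ v) i = v (i + 1) + v (i - 1) - 2 * v i := by
  simp only [mulVec, dotProduct, lapM, of_apply, add_mul, ite_mul, one_mul, zero_mul, neg_mul,
    Finset.sum_add_distrib, Finset.sum_ite_eq', Finset.mem_univ, ↓reduceIte]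
  ring

lemma pow_val_add_one {M : Type*} [Monoid M] {n : ℕ} [NeZero n] {ω : M} (hω : ω ^ n = 1)
    (i : Fin n) : ω ^ ((i + 1 : Fin n) : ℕ) = ω ^ (i : ℕ) * ω := by
  rw [Fin.val_add, ← pow_eq_pow_mod _ hω, pow_add, Fin.val_one', ← pow_eq_pow_mod _ hω, pow_one]

lemma pow_val_sub_one {G₀ : Type*} [GroupWithZero G₀] {n : ℕ} [NeZero n] {ω : G₀}
    (hω : ω ^ n = 1) (i : Fin n) : ω ^ ((i - 1 : Fin n) : ℕ) = ω ^ (i : ℕ) * ω⁻¹ := by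
  have hω0 : ω ≠ 0 := by rintro rfl; simp [zero_pow (NeZero.ne n)] at hω
  rw [eq_mul_inv_iff_mul_eq₀ hω0, ← pow_val_add_one hω, sub_add_cancel]

lemma lapM_mulVec_geometric (n : ℕ) [NeZero n] {ω : ℂ} (hω : ω ^ n = 1) :
    lapM n *ᵥ (fun j : Fin n => ω ^ (j : ℕ)) = (ω + ω⁻¹ - 2) • fun j : Fin n => ω ^ (j : ℕ) := by
  funext i
  rw [lapM_mulVec_apply, pow_val_add_one hω, pow_val_sub_one hω, Pi.smul_apply, smul_eq_mul]
  ring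

lemma Pvec_eq_pow (n k : ℕ) (j : Fin n) :
    Pvec n k j = exp (2 * π * I * k / n) ^ (j : ℕ) := by
  rw [Pvec, ← exp_nat_mul]
  ring_nf

lemma exp_two_pi_I_mul_div_pow_self (n k : ℕ) [NeZero n] : exp (2 * π * I * k / n) ^ n = 1 := by
  rw [← exp_nat_mul, mul_div_cancel₀ _ (Nat.cast_ne_zero.mpr (NeZero.ne n)), mul_comm,
    exp_nat_mul_two_pi_mul_I]

lemma exp_two_mul_I_add_inv_sub_two (α : ℂ) :
    exp (2 * α * I) + (exp (2 * α * I))⁻¹ - 2 = -4 * sin α ^ 2 := by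
  rw [← exp_neg, show -(2 * α * I) = -(2 * α) * I by ring, ← two_cos, cos_two_mul_eq_one_sub]
  ring

lemma lapM_mulVec_Pvec (n k : ℕ) [NeZero n] :
    lapM n *ᵥ Pvec n k = (-4 * (Real.sin (π * k / n) : ℂ) ^ 2) • Pvec n k := by
  have hP : Pvec n k = fun j : Fin n => exp (2 * π * I * k / n) ^ (j : ℕ) :=
    funext (Pvec_eq_pow n k)
  rw [hP, lapM_mulVec_geometric n (exp_two_pi_I_mul_div_pow_self n k), ofReal_sin,
    ← exp_two_mul_I_add_inv_sub_two]
  push_cast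
  ring_nf

lemma Matrix.pow_mulVec_of_mulVec_eq_smul {ι R : Type*} [Fintype ι] [DecidableEq ι]
    [CommSemiring R] {A : Matrix ι ι R} {v : ι → R} {μ : R} (h : A *ᵥ v = μ • v) (m : ℕ) :
    (A ^ m) *ᵥ v = μ ^ m • v := by
  induction m with
  | zero => simp
  | succ m ih =>
    rw [pow_succ, ← mulVec_mulVec, h, mulVec_smul, ih, smul_smul, mul_comm, pow_succ]

lemma deriv_deriv_smul_const {𝕜 𝕜' F : Type*} [NontriviallyNormedField 𝕜] [NormedRing 𝕜']
    [NormedAlgebra 𝕜 𝕜'] [NormedAddCommGroup F] [NormedSpace 𝕜 F] [Module 𝕜' F]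
    [IsBoundedSMul 𝕜' F] [IsScalarTower 𝕜 𝕜' F] {c : 𝕜 → 𝕜'} {x : 𝕜}
    (hc : Differentiable 𝕜 c) (hc' : DifferentiableAt 𝕜 (deriv c) x) (f : F) :
    deriv (deriv fun y => c y • f) x = deriv (deriv c) x • f := by
  have h : deriv (fun y => c y • f) = fun y => deriv c y • f :=
    funext fun y => deriv_smul_const (hc y) f
  rw [h, deriv_smul_const hc' f]

lemma hasDerivAt_cos_sin_comb (a b : ℂ) (γ t : ℝ) :
    HasDerivAt (fun t : ℝ => a * Real.cos (γ * t) + b * Real.sin (γ * t))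
      (γ * b * Real.cos (γ * t) + -(γ * a) * Real.sin (γ * t)) t := by
  have hlin : HasDerivAt (fun t : ℝ => γ * t) γ t := by
    simpa using (hasDerivAt_id t).const_mul γ
  have hcos := (hlin.cos.ofReal_comp).const_mul a
  have hsin := (hlin.sin.ofReal_comp).const_mul b
  exact (hcos.fun_add hsin).congr_deriv (by push_cast; ring)

lemma differentiable_cos_sin_comb (a b : ℂ) (γ : ℝ) :
    Differentiable ℝ fun t : ℝ => a * Real.cos (γ * t) + b * Real.sin (γ * t) :=
  fun t => (hasDerivAt_cos_sin_comb a b γ t).differentiableAt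

lemma deriv_cos_sin_comb (a b : ℂ) (γ : ℝ) :
    deriv (fun t : ℝ => a * Real.cos (γ * t) + b * Real.sin (γ * t)) =
      fun t => γ * b * Real.cos (γ * t) + -(γ * a) * Real.sin (γ * t) :=
  funext fun t => (hasDerivAt_cos_sin_comb a b γ t).deriv

lemma deriv_deriv_cos_sin_comb (a b : ℂ) (γ t : ℝ) :
    deriv (deriv fun t : ℝ => a * Real.cos (γ * t) + b * Real.sin (γ * t)) t =
      -(γ : ℂ) ^ 2 * (a * Real.cos (γ * t) + b * Real.sin (γ * t)) := by
  rw [deriv_cos_sin_comb, deriv_cos_sin_comb]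
  ring

lemma neg_one_pow_succ_mul_neg_pow {R : Type*} [Ring R] (x : R) (m : ℕ) :
    (-1 : R) ^ (m + 1) * (-x) ^ m = -x ^ m := by
  rw [neg_pow x, ← mul_assoc, ← pow_add, Odd.neg_one_pow ⟨m, by ring⟩, neg_one_mul]

theorem undamped_mode_solution_general (n m k : ℕ) [NeZero n] (c₁ c₂ : ℂ)
    (lam γ : ℝ)
    (hlam : lam = -(4 : ℝ) ^ m * Real.sin (Real.pi * k / n) ^ (2 * m))
    (hγ : γ = Real.sqrt (-lam))
    (X : ℝ → Fin n → ℂ)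
    (hX : ∀ t : ℝ, X t = (c₁ * Real.cos (γ * t) + c₂ * Real.sin (γ * t)) • Pvec n k) :
    ∀ t : ℝ, deriv (deriv X) t = ((-1 : ℂ) ^ (m + 1) • (lapM n) ^ m).mulVec (X t) := by
  intro t
  set s := Real.sin (π * k / n)
  have hγ_sq : (γ : ℂ) ^ 2 = (4 * s ^ 2 : ℂ) ^ m := by
    have hneg_lam_nonneg : 0 ≤ -lam := by rw [hlam, neg_mul, neg_neg, pow_mul]; positivity
    rw [← ofReal_pow, hγ, Real.sq_sqrt hneg_lam_nonneg, hlam, pow_mul]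
    push_cast
    ring
  have hd : Differentiable ℝ (deriv fun t : ℝ => c₁ * Real.cos (γ * t) + c₂ * Real.sin (γ * t)) := by
    rw [deriv_cos_sin_comb]
    exact differentiable_cos_sin_comb _ _ γ
  rw [funext hX, deriv_deriv_smul_const (differentiable_cos_sin_comb c₁ c₂ γ) (hd t),
    deriv_deriv_cos_sin_comb, smul_mulVec, mulVec_smul,
    pow_mulVec_of_mulVec_eq_smul (lapM_mulVec_Pvec n k), smul_smul, smul_smul, mul_right_comm,
    show -4 * (s : ℂ) ^ 2 = -(4 * s ^ 2) by ring, neg_one_pow_succ_mul_neg_pow, hγ_sq]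

/-- Undamped oscillating mode solutions: with `λ = -4^m sin^{2m}(πk/n)` and `γ = √(-λ)`,
`X(t) = (c₁ cos(γt) + c₂ sin(γt)) • P_k` solves `X'' = (-1)^{m+1} M^m X`. -/
theorem undamped_mode_solution (n m k : ℕ) [NeZero n] (hn : 3 ≤ n) (hm : 1 ≤ m)
    (hk1 : 1 ≤ k) (hkn : k < n) (c₁ c₂ : ℂ)
    (lam γ : ℝ)
    (hlam : lam = -(4 : ℝ) ^ m * Real.sin (Real.pi * k / n) ^ (2 * m))
    (hγ : γ = Real.sqrt (-lam))
    (X : ℝ → Fin n → ℂ)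
    (hX : ∀ t : ℝ, X t = (c₁ * Real.cos (γ * t) + c₂ * Real.sin (γ * t)) • Pvec n k) :
    ∀ t : ℝ, deriv (deriv X) t = ((-1 : ℂ) ^ (m + 1) • (lapM n) ^ m).mulVec (X t) :=
  undamped_mode_solution_general n m k c₁ c₂ lam γ hlam hγ X hX
end

section
/- Let n ≥ 3, m ≥ 1, β > 0 with 4^m sin^{2m}(π/n) < β²/4, and suppose X_0 = Σ_k α_k^0 P_k with α_1^0 ≠ 0. Let X(t) be the solution of X'' + βX' = (-1)^{m+1}M^m X with X(0) = X_0 and all free constants zero (so α_k(t) = α_k^0 e^{r_{+,k}t} for k ≥ 1, α_0(t) = α_0^0, where r_{+,k} = -β/2 + √(β²/4 + λ_{m,k})). Then the rescaled polygon Y(t) = e^{-r_{+,1}t}(X(t) - α_0^0 P_0) converges as t → ∞ to α_1^0 P_1 + α_{n-1}^0 P_{n-1}. -/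
/-!
After subtracting the constant mode, every mode of `X` decays like `e^{r₊,ₖ t}`. The modes
`k = 1` and `k = n - 1` share the slowest rate `r₊,₁`, because `sin(π(n-1)/n) = sin(π/n)`, while
`sin(πk/n) > sin(π/n)` for `2 ≤ k ≤ n - 2` makes every other rate strictly smaller (the square
root is strictly increasing at `β²/4 + λ₁ > 0`). After rescaling by `e^{-r₊,₁ t}` the two slowest modes are constant and all others
tend to zero.
-/

open Filter Topology Real

theorem Real.sin_lt_sin_of_lt_of_lt_pi_sub {a x : ℝ} (ha : 0 ≤ a) (hax : a < x)
    (hxa : x < π - a) : sin a < sin x := by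
  rcases le_total x (π / 2) with hx | hx
  · exact sin_lt_sin_of_lt_of_le_pi_div_two (by linarith [pi_pos]) hx hax
  · rw [← sin_pi_sub x]
    exact sin_lt_sin_of_lt_of_le_pi_div_two (by linarith [pi_pos]) (by linarith) (by linarith)

theorem Real.sin_pi_mul_natSub_div {n k : ℕ} (hk : k ≤ n) :
    sin (π * (n - k : ℕ) / n) = sin (π * k / n) := by
  rcases Nat.eq_zero_or_pos n with rfl | hn
  · simp
  rw [Nat.cast_sub hk, ← sin_pi_sub]
  congr 1
  field_simp
  ring

/-- The eigenvalue `λ_{m,k}` of `(-1)^{m+1} M^m` on the polygon `P_k`. -/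
noncomputable def lapEigenvalue (m n k : ℕ) : ℝ := -4 ^ m * sin (π * k / n) ^ (2 * m)

theorem lapEigenvalue_natSub {m n k : ℕ} (hk : k ≤ n) :
    lapEigenvalue m n (n - k) = lapEigenvalue m n k := by
  rw [lapEigenvalue, lapEigenvalue, sin_pi_mul_natSub_div hk]

theorem lapEigenvalue_lt_one {m n k : ℕ} (hm : m ≠ 0) (hk : 2 ≤ k) (hkn : k + 2 ≤ n) :
    lapEigenvalue m n k < lapEigenvalue m n 1 := by
  have hkr : (2 : ℝ) ≤ k := by exact_mod_cast hk
  have hknr : (k : ℝ) + 2 ≤ n := by exact_mod_cast hkn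
  have hn : (0 : ℝ) < n := by linarith
  have hsin : sin (π / n) < sin (π * k / n) := by
    apply sin_lt_sin_of_lt_of_lt_pi_sub (by positivity)
    · rw [div_lt_div_iff_of_pos_right hn]
      nlinarith [pi_pos]
    · rw [lt_sub_iff_add_lt, ← add_div, div_lt_iff₀ hn]
      nlinarith [pi_pos]
  have hsin₀ : 0 ≤ sin (π / n) :=
    sin_nonneg_of_nonneg_of_le_pi (by positivity) (div_le_self pi_pos.le (by linarith))
  have hpow := pow_lt_pow_left₀ hsin hsin₀ (by omega : 2 * m ≠ 0)
  simp only [lapEigenvalue, Nat.cast_one, mul_one, neg_mul, neg_lt_neg_iff]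
  gcongr

theorem tendsto_sum_cexp_smul {ι E : Type*} [NormedAddCommGroup E] [NormedSpace ℂ E]
    (s : Finset ι) (c : ι → ℝ) (hc : ∀ k ∈ s, c k ≤ 0) (v : ι → E) :
    Tendsto (fun t : ℝ => ∑ k ∈ s, Complex.exp (c k * t) • v k) atTop
      (𝓝 (∑ k ∈ s with c k = 0, v k)) := by
  rw [Finset.sum_filter]
  refine tendsto_finsetSum s fun k hk => ?_
  split_ifs with h
  · simp [h]
  · have hdecay : Tendsto (fun t : ℝ => Complex.exp (c k * t)) atTop (𝓝 0) := by
      rw [Complex.tendsto_exp_nhds_zero_iff]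
      simpa using tendsto_id.const_mul_atTop_of_neg (lt_of_le_of_ne (hc k hk) h)
    simpa using hdecay.smul_const (v k)

theorem rescaled_limit_overdamped_general (n m : ℕ) [NeZero n] (hn : 3 ≤ n) (hm : 1 ≤ m)
    (β : ℝ)
    (hover : (4 : ℝ) ^ m * Real.sin (Real.pi / n) ^ (2 * m) < β ^ 2 / 4)
    (α0 : ℕ → ℂ)
    (lam rp : ℕ → ℝ)
    (hlam : ∀ k, lam k = -(4 : ℝ) ^ m * Real.sin (Real.pi * k / n) ^ (2 * m))
    (hrp : ∀ k, rp k = -β / 2 + Real.sqrt (β ^ 2 / 4 + lam k))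
    (X : ℝ → Fin n → ℂ)
    (hX : ∀ t : ℝ, X t = α0 0 • Pvec n 0
      + ∑ k ∈ Finset.Ico 1 n, (α0 k * Complex.exp ((rp k : ℂ) * t)) • Pvec n k) :
    Filter.Tendsto
      (fun t : ℝ => Complex.exp (-(rp 1 : ℂ) * t) • (X t - α0 0 • Pvec n 0))
      Filter.atTop
      (nhds (α0 1 • Pvec n 1 + α0 (n - 1) • Pvec n (n - 1))) := by
  obtain rfl : lam = lapEigenvalue m n := funext hlam
  have hpos : 0 < β ^ 2 / 4 + lapEigenvalue m n 1 := by
    simpa [lapEigenvalue] using hover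
  have hrp_last : rp (n - 1) = rp 1 := by
    rw [hrp, hrp, lapEigenvalue_natSub (by omega)]
  have hrp_lt : ∀ k, 2 ≤ k → k + 2 ≤ n → rp k < rp 1 := fun k hk hkn => by
    rw [hrp, hrp, add_lt_add_iff_left, sqrt_lt_sqrt_iff_of_pos hpos, add_lt_add_iff_left]
    exact lapEigenvalue_lt_one (by omega) hk hkn
  have hslowest : ∀ k ∈ Finset.Ico 1 n, rp k - rp 1 ≤ 0 := fun k hk => by
    rw [Finset.mem_Ico] at hk
    rcases (by omega : k = 1 ∨ k = n - 1 ∨ 2 ≤ k ∧ k + 2 ≤ n) with rfl | rfl | ⟨hk2, hkn⟩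
    exacts [le_of_eq (sub_self _), le_of_eq (sub_eq_zero.2 hrp_last),
      sub_nonpos.2 (hrp_lt k hk2 hkn).le]
  have hslow_modes : {k ∈ Finset.Ico 1 n | rp k - rp 1 = 0} = {1, n - 1} := by
    ext k
    simp only [Finset.mem_filter, Finset.mem_Ico, Finset.mem_insert, Finset.mem_singleton,
      sub_eq_zero]
    constructor
    · rintro ⟨hk, hrk⟩
      by_contra! hne
      exact (hrp_lt k (by omega) (by omega)).ne hrk
    · rintro (rfl | rfl)
      exacts [⟨by omega, rfl⟩, ⟨by omega, hrp_last⟩]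
  have hmodes : ∀ t : ℝ, Complex.exp (-(rp 1 : ℂ) * t) • (X t - α0 0 • Pvec n 0) =
      ∑ k ∈ Finset.Ico 1 n, Complex.exp (((rp k - rp 1 : ℝ) : ℂ) * t) • (α0 k • Pvec n k) :=
    fun t => by
      rw [hX, add_sub_cancel_left, Finset.smul_sum]
      refine Finset.sum_congr rfl fun k _ => ?_
      rw [smul_smul, smul_smul, ← mul_assoc, mul_comm _ (α0 k), mul_assoc, ← Complex.exp_add]
      push_cast
      ring_nf
  simp_rw [hmodes]
  rw [← Finset.sum_pair (f := fun k => α0 k • Pvec n k) (by omega : 1 ≠ n - 1), ← hslow_modes]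
  exact tendsto_sum_cexp_smul _ _ hslowest _

/-- Overdamped regime, rescaled limit: when `4^m sin^{2m}(π/n) < β²/4` and `α⁰_1 ≠ 0`,
the rescaled polygon `Y(t) = e^{-r₊,₁ t}(X(t) - α⁰_0 P_0)` converges as `t → ∞` to
`α⁰_1 P_1 + α⁰_{n-1} P_{n-1}`, an affine image of a regular polygon. -/
theorem rescaled_limit_overdamped (n m : ℕ) [NeZero n] (hn : 3 ≤ n) (hm : 1 ≤ m)
    (β : ℝ) (hβ : 0 < β)
    (hover : (4 : ℝ) ^ m * Real.sin (Real.pi / n) ^ (2 * m) < β ^ 2 / 4)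
    (α0 : ℕ → ℂ) (hα1 : α0 1 ≠ 0)
    (lam rp : ℕ → ℝ)
    (hlam : ∀ k, lam k = -(4 : ℝ) ^ m * Real.sin (Real.pi * k / n) ^ (2 * m))
    (hrp : ∀ k, rp k = -β / 2 + Real.sqrt (β ^ 2 / 4 + lam k))
    (X : ℝ → Fin n → ℂ)
    (hX : ∀ t : ℝ, X t = α0 0 • Pvec n 0
      + ∑ k ∈ Finset.Ico 1 n, (α0 k * Complex.exp ((rp k : ℂ) * t)) • Pvec n k) :
    Filter.Tendsto
      (fun t : ℝ => Complex.exp (-(rp 1 : ℂ) * t) • (X t - α0 0 • Pvec n 0))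
      Filter.atTop
      (nhds (α0 1 • Pvec n 1 + α0 (n - 1) • Pvec n (n - 1))) :=
  rescaled_limit_overdamped_general n m hn hm β hover α0 lam rp hlam hrp X hX
end
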